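/- Let y, ŷ, p : Fin n → ℝ with E[ŷ] = E[y] and E[ŷ²] = E[y²] (empirical means). Then E[(ŷ − p)²] = E[(y − p)²] + 2·Cov(p, y − ŷ), where Cov(a,b) = E[(a − E[a])·(b − E[b])]. (This is Theorem 1 of the paper: minimising MSE against the fair labels equals minimising the original MSE plus twice the covariance of the predictions with the unfairness y − ŷ.) -/

import Mathlib

/-!
Pointwise, `(ŷ - p)² = (y - p)² + (ŷ² - y²) + 2 p (y - ŷ)`. Averaging, the middle term vanishes
by the second-moment hypothesis, and since `y - ŷ` has mean zero by the first-moment hypothesis,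
`E[p (y - ŷ)]` is exactly `Cov(p, y - ŷ)`.
-/

open Finset

/-- Empirical mean of a finite sequence. -/
noncomputable def emean {n : ℕ} (z : Fin n → ℝ) : ℝ := (∑ i, z i) / n

/-- Empirical covariance of two finite sequences. -/
noncomputable def ecov {n : ℕ} (a b : Fin n → ℝ) : ℝ :=
  emean (fun i => (a i - emean a) * (b i - emean b))

lemma emean_add {n : ℕ} (a b : Fin n → ℝ) :
    emean (fun i => a i + b i) = emean a + emean b := by
  simp only [emean, sum_add_distrib, add_div]

lemma emean_sub {n : ℕ} (a b : Fin n → ℝ) :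
    emean (fun i => a i - b i) = emean a - emean b := by
  simp only [emean, sum_sub_distrib, sub_div]

lemma emean_const_mul {n : ℕ} (c : ℝ) (a : Fin n → ℝ) :
    emean (fun i => c * a i) = c * emean a := by
  simp only [emean, ← mul_sum, mul_div_assoc]

lemma ecov_eq_emean_mul_of_emean_eq_zero {n : ℕ} (a b : Fin n → ℝ) (hb : emean b = 0) :
    ecov a b = emean (fun i => a i * b i) := by
  have hexpand : (fun i => (a i - emean a) * (b i - emean b))
      = fun i => a i * b i - emean a * b i := by
    funext i; rw [hb]; ring
  rw [ecov, hexpand, emean_sub, emean_const_mul, hb, mul_zero, sub_zero]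

/-- Theorem 1: minimising MSE against the fair labels equals minimising the original
MSE plus twice the covariance of the predictions with the unfairness `y − ŷ`. -/
theorem mse_fair_decomposition {n : ℕ} (y yhat p : Fin n → ℝ)
    (h1 : emean yhat = emean y)
    (h2 : emean (fun i => yhat i ^ 2) = emean (fun i => y i ^ 2)) :
    emean (fun i => (yhat i - p i) ^ 2) =
      emean (fun i => (y i - p i) ^ 2) + 2 * ecov p (fun i => y i - yhat i) := by
  have hgap : emean (fun i => y i - yhat i) = 0 := by
    rw [emean_sub, h1, sub_self]
  have hpointwise : (fun i => (yhat i - p i) ^ 2)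
      = fun i => ((y i - p i) ^ 2 + (yhat i ^ 2 - y i ^ 2)) + 2 * (p i * (y i - yhat i)) := by
    funext i; ring
  rw [hpointwise, emean_add, emean_add, emean_sub, h2, sub_self, add_zero, emean_const_mul,
    ecov_eq_emean_mul_of_emean_eq_zero _ _ hgap]
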